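/- arXiv:2307.11417 — 3 statements merged into one kernel-verified Lean document; each statement's English description precedes it below -/
import Mathlib

section
/- Let U be an operator on n qubits that is permeable on its last p qubits and V an operator on m qubits that is permeable on its first p qubits. Then (U ⊗ I^{⊗(m−p)}) and (I^{⊗(n−p)} ⊗ V), both viewed as operators on n+m−p qubits (overlapping exactly on the shared p qubits), commute: (U ⊗ I^{⊗(m−p)})(I^{⊗(n−p)} ⊗ V) = (I^{⊗(n−p)} ⊗ V)(U ⊗ I^{⊗(m−p)}). -/
open Matrix

/-- Extend an operator on the first two registers (α × γ) to act on α × γ × β,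
as the identity on β. -/
def liftLeft {α γ β : Type*} [DecidableEq β]
    (U : Matrix (α × γ) (α × γ) ℂ) : Matrix (α × γ × β) (α × γ × β) ℂ :=
  Matrix.of fun x y => U (x.1, x.2.1) (y.1, y.2.1) * (if x.2.2 = y.2.2 then 1 else 0)

/-- Extend an operator on the last two registers (γ × β) to act on α × γ × β,
as the identity on α. -/
def liftRight {α γ β : Type*} [DecidableEq α]
    (V : Matrix (γ × β) (γ × β) ℂ) : Matrix (α × γ × β) (α × γ × β) ℂ :=
  Matrix.of fun x y => (if x.1 = y.1 then 1 else 0) * V x.2 y.2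

/-!
Commuting with `Z` on qubit `k` forces an operator to preserve the computational-basis value
of that qubit, since the two eigenvalues `±1` of `Z` differ. Hence `U` and `V` are block
diagonal with respect to the shared register `c`. On such operators both products
`liftLeft U * liftRight V` and `liftRight V * liftLeft U` have the entry
`U (a, c) (a', c) * V (c, b) (c, b')` at `((a, c, b), (a', c, b'))` and vanish off the blocks.
-/

namespace Matrix

variable {ι R : Type*} [Fintype ι] [DecidableEq ι] [CommRing R] [NoZeroDivisors R]

theorem apply_eq_zero_of_mul_diagonal_eq {M : Matrix ι ι R} {d : ι → R}
    (h : M * diagonal d = diagonal d * M) {x y : ι} (hd : d x ≠ d y) : M x y = 0 := by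
  have hxy : M x y * d y = d x * M x y := by
    simpa only [mul_diagonal, diagonal_mul] using congr_fun (congr_fun h x) y
  have : (d x - d y) * M x y = 0 := by linear_combination -hxy
  exact (mul_eq_zero.mp this).resolve_left (sub_ne_zero.mpr hd)

theorem apply_eq_zero_of_mul_diagonal_neg_one_pow_eq {κ : Type*} (f : ι → κ → Fin 2)
    {M : Matrix ι ι R} [NeZero (2 : R)]
    (h : ∀ k, M * diagonal (fun x => (-1 : R) ^ (f x k : ℕ))
      = diagonal (fun x => (-1 : R) ^ (f x k : ℕ)) * M)
    {x y : ι} (hxy : f x ≠ f y) : M x y = 0 := by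
  obtain ⟨k, hk⟩ := Function.ne_iff.mp hxy
  refine apply_eq_zero_of_mul_diagonal_eq (h k) ?_
  have hne : (-1 : R) ≠ 1 := by
    rw [Ne, neg_eq_iff_add_eq_zero, one_add_one_eq_two]
    exact two_ne_zero
  generalize f x k = i, f y k = j at hk ⊢
  fin_cases i <;> fin_cases j <;> simp_all [hne.symm]

end Matrix

section Lifts

variable {α γ β : Type*} [Fintype α] [Fintype γ] [Fintype β] [DecidableEq α] [DecidableEq β]

theorem liftLeft_mul_liftRight_apply (U : Matrix (α × γ) (α × γ) ℂ)
    (V : Matrix (γ × β) (γ × β) ℂ) (a a' : α) (c c' : γ) (b b' : β) :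
    (liftLeft (β := β) U * liftRight (α := α) V) (a, c, b) (a', c', b') =
      ∑ z, U (a, c) (a', z) * V (z, b) (c', b') := by
  simp [mul_apply, liftLeft, liftRight, Fintype.sum_prod_type]

theorem liftRight_mul_liftLeft_apply (U : Matrix (α × γ) (α × γ) ℂ)
    (V : Matrix (γ × β) (γ × β) ℂ) (a a' : α) (c c' : γ) (b b' : β) :
    (liftRight (α := α) V * liftLeft (β := β) U) (a, c, b) (a', c', b') =
      ∑ z, V (c, b) (z, b') * U (a, z) (a', c') := by
  simp [mul_apply, liftLeft, liftRight, Fintype.sum_prod_type]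

theorem liftLeft_mul_liftRight_comm {U : Matrix (α × γ) (α × γ) ℂ}
    {V : Matrix (γ × β) (γ × β) ℂ}
    (hU : ∀ x y : α × γ, x.2 ≠ y.2 → U x y = 0)
    (hV : ∀ x y : γ × β, x.1 ≠ y.1 → V x y = 0) :
    liftLeft (β := β) U * liftRight (α := α) V = liftRight (α := α) V * liftLeft (β := β) U := by
  ext ⟨a, c, b⟩ ⟨a', c', b'⟩
  rw [liftLeft_mul_liftRight_apply, liftRight_mul_liftLeft_apply,
    Finset.sum_eq_single_of_mem c (Finset.mem_univ _)
      fun z _ hz => by rw [hU (a, c) (a', z) (Ne.symm hz), zero_mul],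
    Finset.sum_eq_single_of_mem c (Finset.mem_univ _)
      fun z _ hz => by rw [hV (c, b) (z, b') (Ne.symm hz), zero_mul]]
  obtain rfl | hcc' := eq_or_ne c c'
  · exact mul_comm _ _
  · rw [hV (c, b) (c', b') hcc', hU (a, c) (a', c') hcc', mul_zero, mul_zero]

end Lifts

theorem stmt2_general (n m p : ℕ)
    (U : Matrix ((Fin (n - p) → Fin 2) × (Fin p → Fin 2))
        ((Fin (n - p) → Fin 2) × (Fin p → Fin 2)) ℂ)
    (V : Matrix ((Fin p → Fin 2) × (Fin (m - p) → Fin 2))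
        ((Fin p → Fin 2) × (Fin (m - p) → Fin 2)) ℂ)
    (hU : ∀ k : Fin p,
      U * Matrix.diagonal (fun x => (-1 : ℂ) ^ (x.2 k : ℕ))
        = Matrix.diagonal (fun x => (-1 : ℂ) ^ (x.2 k : ℕ)) * U)
    (hV : ∀ k : Fin p,
      V * Matrix.diagonal (fun x => (-1 : ℂ) ^ (x.1 k : ℕ))
        = Matrix.diagonal (fun x => (-1 : ℂ) ^ (x.1 k : ℕ)) * V) :
    (liftLeft (β := Fin (m - p) → Fin 2) U) * (liftRight (α := Fin (n - p) → Fin 2) V)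
      = (liftRight (α := Fin (n - p) → Fin 2) V) * (liftLeft (β := Fin (m - p) → Fin 2) U) :=
  liftLeft_mul_liftRight_comm
    (fun _ _ => apply_eq_zero_of_mul_diagonal_neg_one_pow_eq Prod.snd hU)
    (fun _ _ => apply_eq_zero_of_mul_diagonal_neg_one_pow_eq Prod.fst hV)

/-- If U (on n qubits) is permeable on its last p qubits and V (on m qubits) is permeable
on its first p qubits, then their extensions to the joint n+m−p qubit system, overlapping
exactly on the shared p qubits, commute. -/
theorem stmt2 (n m p : ℕ) (hpn : p ≤ n) (hpm : p ≤ m)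
    (U : Matrix ((Fin (n - p) → Fin 2) × (Fin p → Fin 2))
        ((Fin (n - p) → Fin 2) × (Fin p → Fin 2)) ℂ)
    (V : Matrix ((Fin p → Fin 2) × (Fin (m - p) → Fin 2))
        ((Fin p → Fin 2) × (Fin (m - p) → Fin 2)) ℂ)
    (hU : ∀ k : Fin p,
      U * Matrix.diagonal (fun x => (-1 : ℂ) ^ (x.2 k : ℕ))
        = Matrix.diagonal (fun x => (-1 : ℂ) ^ (x.2 k : ℕ)) * U)
    (hV : ∀ k : Fin p,
      V * Matrix.diagonal (fun x => (-1 : ℂ) ^ (x.1 k : ℕ))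
        = Matrix.diagonal (fun x => (-1 : ℂ) ^ (x.1 k : ℕ)) * V) :
    (liftLeft (β := Fin (m - p) → Fin 2) U) * (liftRight (α := Fin (n - p) → Fin 2) V)
      = (liftRight (α := Fin (n - p) → Fin 2) V) * (liftLeft (β := Fin (m - p) → Fin 2) U) :=
  stmt2_general n m p U V hU hV
end

section
/- Let H = H₁ ⊗ H₂ be a finite-dimensional Hilbert space, and let U and V be unitaries on ℂ² ⊗ H₁ ⊗ H₂ that both commute with Z ⊗ I. If U = A ⊗ I_{H₂} with A on ℂ² ⊗ H₁ permeable on the ℂ² factor, and V acts as (P₀ ⊗ B₀ + P₁ ⊗ B₁) with B_b on H₂ (acting trivially on H₁) and P_b = |b⟩⟨b|, then U V = V U. -/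
open Matrix Kronecker

def Zgate : Matrix (Fin 2) (Fin 2) ℂ := !![1, 0; 0, -1]
def P0 : Matrix (Fin 2) (Fin 2) ℂ := !![1, 0; 0, 0]
def P1 : Matrix (Fin 2) (Fin 2) ℂ := !![0, 0; 0, 1]

/-- Extension of A (acting on ℂ² ⊗ H₁) to ℂ² ⊗ H₁ ⊗ H₂ as the identity on H₂. -/
def Ufull {α β : Type*} [DecidableEq β]
    (A : Matrix (Fin 2 × α) (Fin 2 × α) ℂ) :
    Matrix (Fin 2 × α × β) (Fin 2 × α × β) ℂ :=
  Matrix.of fun x y => A (x.1, x.2.1) (y.1, y.2.1) * (if x.2.2 = y.2.2 then 1 else 0)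

/-- The operator P₀ ⊗ B₀ + P₁ ⊗ B₁ on ℂ² ⊗ H₂, extended to ℂ² ⊗ H₁ ⊗ H₂ as the
identity on H₁. -/
def Vfull {α β : Type*} [DecidableEq α]
    (B₀ B₁ : Matrix β β ℂ) : Matrix (Fin 2 × α × β) (Fin 2 × α × β) ℂ :=
  Matrix.of fun x y =>
    (if x.2.1 = y.2.1 then 1 else 0) *
      (P0 x.1 y.1 * B₀ x.2.2 y.2.2 + P1 x.1 y.1 * B₁ x.2.2 y.2.2)

/-- If U = A ⊗ I_{H₂} with A permeable on the shared first qubit, and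
V = P₀ ⊗ B₀ + P₁ ⊗ B₁ acts on the first qubit and H₂, and both are unitary, then
U and V commute: they overlap only on the shared first qubit, on which both are
permeable. -/
theorem stmt6 (a b : ℕ)
    (A : Matrix (Fin 2 × (Fin a → Fin 2)) (Fin 2 × (Fin a → Fin 2)) ℂ)
    (B₀ B₁ : Matrix (Fin b → Fin 2) (Fin b → Fin 2) ℂ)
    (hA : (Zgate ⊗ₖ (1 : Matrix (Fin a → Fin 2) (Fin a → Fin 2) ℂ)) * A
        = A * (Zgate ⊗ₖ (1 : Matrix (Fin a → Fin 2) (Fin a → Fin 2) ℂ)))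
    (hUunitary : Ufull (β := Fin b → Fin 2) A
        ∈ Matrix.unitaryGroup (Fin 2 × (Fin a → Fin 2) × (Fin b → Fin 2)) ℂ)
    (hVunitary : Vfull (α := Fin a → Fin 2) B₀ B₁
        ∈ Matrix.unitaryGroup (Fin 2 × (Fin a → Fin 2) × (Fin b → Fin 2)) ℂ) :
    Ufull (β := Fin b → Fin 2) A * Vfull (α := Fin a → Fin 2) B₀ B₁
      = Vfull (α := Fin a → Fin 2) B₀ B₁ * Ufull (β := Fin b → Fin 2) A := by

  -- A is block diagonal in the first qubit
  have hA0 : ∀ (i j : Fin 2) (x y : Fin a → Fin 2), i ≠ j → A (i, x) (j, y) = 0 := by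
    intro i j x y hij
    have h : ((Zgate ⊗ₖ (1 : Matrix (Fin a → Fin 2) (Fin a → Fin 2) ℂ)) * A) (i, x) (j, y)
        = (A * (Zgate ⊗ₖ (1 : Matrix (Fin a → Fin 2) (Fin a → Fin 2) ℂ))) (i, x) (j, y) := by
      rw [hA]
    simp only [Matrix.mul_apply, Matrix.kroneckerMap_apply, Matrix.one_apply,
      Fintype.sum_prod_type, mul_ite, mul_one, mul_zero, ite_mul, zero_mul, one_mul,
      Finset.sum_ite_eq', Finset.sum_ite_eq, Finset.mem_univ, if_true] at h
    rw [Fin.sum_univ_two, Fin.sum_univ_two] at h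
    fin_cases i <;> fin_cases j <;> simp only [Fin.mk_zero, Fin.mk_one, Zgate, Matrix.of_apply, Matrix.cons_val', Matrix.cons_val_zero,
      Matrix.cons_val_one, Matrix.head_cons, Matrix.empty_val', Matrix.cons_val_fin_one,
      Matrix.head_fin_const, one_mul, mul_one, zero_mul, mul_zero, add_zero, zero_add,
      neg_mul, mul_neg, Fin.isValue, ne_eq] at h hij ⊢
    · exact absurd trivial hij
    · linear_combination ((1:ℂ)/2) * h
    · linear_combination (-(1:ℂ)/2) * h
    · exact absurd trivial hij
  ext ⟨x1, x21, x22⟩ ⟨z1, z21, z22⟩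
  simp only [Matrix.mul_apply, Ufull, Vfull, Matrix.of_apply, Fintype.sum_prod_type,
    mul_ite, mul_one, mul_zero, ite_mul, zero_mul, one_mul,
    Finset.sum_ite_eq', Finset.sum_ite_eq, Finset.mem_univ, if_true]
  fin_cases x1 <;> fin_cases z1 <;>
    simp [P0, P1, Fin.sum_univ_two, hA0, mul_comm, mul_assoc, mul_left_comm] <;> ring
end

section
/- The Margolus-style circuit RY(−π/4) · CX₁ · RY(π/4) · CX₀ · RY(−π/4) · CX₁ · RY(π/4) on three qubits (rotations on the target qubit, CX_k controlled by control qubit k targeting the target qubit) implements a qfree unitary on three qubits: its unitary maps each computational basis state to ±1 times a computational basis state, even though the individual RY gates are not qfree. -/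
open Matrix Kronecker

/-- The RY(θ) rotation gate. -/
noncomputable def RY (θ : ℝ) : Matrix (Fin 2) (Fin 2) ℂ :=
  !![(Real.cos (θ / 2) : ℂ), -(Real.sin (θ / 2) : ℂ);
     (Real.sin (θ / 2) : ℂ), (Real.cos (θ / 2) : ℂ)]

/-- RY(θ) acting on the target (third) qubit of a three-qubit system. -/
noncomputable def RYfull (θ : ℝ) :
    Matrix ((Fin 2 × Fin 2) × Fin 2) ((Fin 2 × Fin 2) × Fin 2) ℂ :=
  (1 : Matrix (Fin 2 × Fin 2) (Fin 2 × Fin 2) ℂ) ⊗ₖ RY θ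

/-- CNOT with control on qubit 0 and target on qubit 2. -/
def CX0 : Matrix ((Fin 2 × Fin 2) × Fin 2) ((Fin 2 × Fin 2) × Fin 2) ℂ :=
  Matrix.of fun x y =>
    if x.1 = y.1 ∧ x.2 = (if y.1.1 = 1 then y.2 + 1 else y.2) then 1 else 0

/-- CNOT with control on qubit 1 and target on qubit 2. -/
def CX1 : Matrix ((Fin 2 × Fin 2) × Fin 2) ((Fin 2 × Fin 2) × Fin 2) ℂ :=
  Matrix.of fun x y =>
    if x.1 = y.1 ∧ x.2 = (if y.1.2 = 1 then y.2 + 1 else y.2) then 1 else 0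

/-- The Margolus circuit RY(−π/4)·CX₁·RY(π/4)·CX₀·RY(−π/4)·CX₁·RY(π/4). -/
noncomputable def Margolus : Matrix ((Fin 2 × Fin 2) × Fin 2) ((Fin 2 × Fin 2) × Fin 2) ℂ :=
  RYfull (-(Real.pi / 4)) * CX1 * RYfull (Real.pi / 4) * CX0 *
    RYfull (-(Real.pi / 4)) * CX1 * RYfull (Real.pi / 4)

/-!
All gates of the circuit are block diagonal over the two control qubits, so on each control
basis state the circuit acts on the target by a word in `RY (±π/4)` and `X`. Conjugation by `X`
negates the angle of `RY`, so the rotations cancel unless both controls are set, where they add up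
to `RY (-π)` and `RY (-π) * X = Z`. Every block is thus `1`, `X` or `Z`, each of which sends basis
states to signed basis states.
-/

section Controlled

variable {ι n α : Type*} [DecidableEq ι]

/-- Applies `f i` to the target register when the control register is in the basis state `i`. -/
def controlledGate [Zero α] (f : ι → Matrix n n α) : Matrix (ι × n) (ι × n) α :=
  (blockDiagonal f).submatrix Prod.swap Prod.swap

theorem controlledGate_apply [Zero α] (f : ι → Matrix n n α) (i j : ι) (a b : n) :
    controlledGate f (i, a) (j, b) = if i = j then f i a b else 0 :=
  rfl

theorem controlledGate_mul [Fintype ι] [Fintype n] [NonUnitalNonAssocSemiring α]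
    (f g : ι → Matrix n n α) :
    controlledGate f * controlledGate g = controlledGate (f * g) := by
  rw [controlledGate, controlledGate, ← Equiv.coe_prodComm,
    submatrix_mul_equiv _ _ _ (Equiv.prodComm ι n), ← blockDiagonal_mul]
  rfl

theorem one_kronecker_eq_controlledGate [DecidableEq n] [MulZeroOneClass α] (A : Matrix n n α) :
    (1 : Matrix ι ι α) ⊗ₖ A = controlledGate fun _ => A := by
  ext ⟨i, a⟩ ⟨j, b⟩
  by_cases h : i = j <;> simp [controlledGate_apply, one_apply, h]

end Controlled

def pauliX : Matrix (Fin 2) (Fin 2) ℂ := !![0, 1; 1, 0]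

def pauliZ : Matrix (Fin 2) (Fin 2) ℂ := !![1, 0; 0, -1]

theorem pauliX_mul_pauliX : pauliX * pauliX = 1 := by
  ext i j
  fin_cases i <;> fin_cases j <;> simp [pauliX]

theorem RY_zero : RY 0 = 1 := by
  ext i j
  fin_cases i <;> fin_cases j <;> simp [RY]

theorem RY_mul_RY (a b : ℝ) : RY a * RY b = RY (a + b) := by
  have h : (a + b) / 2 = a / 2 + b / 2 := by ring
  ext i j
  fin_cases i <;> fin_cases j <;>
    simp [RY, h, Real.cos_add, Real.sin_add] <;> ring

theorem pauliX_mul_RY (a : ℝ) : pauliX * RY a = RY (-a) * pauliX := by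
  ext i j
  fin_cases i <;> fin_cases j <;> simp [RY, pauliX, neg_div]

theorem RY_neg_pi_mul_pauliX : RY (-Real.pi) * pauliX = pauliZ := by
  ext i j
  fin_cases i <;> fin_cases j <;> simp [RY, pauliX, pauliZ, neg_div]

theorem RY_mul_RY_assoc (a b : ℝ) (M : Matrix (Fin 2) (Fin 2) ℂ) :
    RY a * (RY b * M) = RY (a + b) * M := by
  rw [← mul_assoc, RY_mul_RY]

theorem pauliX_mul_RY_assoc (a : ℝ) (M : Matrix (Fin 2) (Fin 2) ℂ) :
    pauliX * (RY a * M) = RY (-a) * (pauliX * M) := by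
  rw [← mul_assoc, pauliX_mul_RY, mul_assoc]

theorem RYfull_eq_controlledGate (θ : ℝ) : RYfull θ = controlledGate fun _ => RY θ :=
  one_kronecker_eq_controlledGate _

theorem of_ite_flip_eq_controlledGate {ι : Type*} [DecidableEq ι] (P : ι → Prop)
    [DecidablePred P] :
    (of fun x y : ι × Fin 2 =>
      if x.1 = y.1 ∧ x.2 = (if P y.1 then y.2 + 1 else y.2) then (1 : ℂ) else 0) =
    controlledGate fun i => if P i then pauliX else 1 := by
  ext ⟨i, a⟩ ⟨j, b⟩
  by_cases h : i = j
  · subst h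
    by_cases hP : P i <;> fin_cases a <;> fin_cases b <;> simp [controlledGate_apply, pauliX, hP]
  · simp [controlledGate_apply, h]

theorem CX0_eq_controlledGate : CX0 = controlledGate fun p => if p.1 = 1 then pauliX else 1 :=
  of_ite_flip_eq_controlledGate fun p : Fin 2 × Fin 2 => p.1 = 1

theorem CX1_eq_controlledGate : CX1 = controlledGate fun p => if p.2 = 1 then pauliX else 1 :=
  of_ite_flip_eq_controlledGate fun p : Fin 2 × Fin 2 => p.2 = 1

def margolusBlock (p : Fin 2 × Fin 2) : Matrix (Fin 2) (Fin 2) ℂ :=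
  ![![1, 1], ![pauliX, pauliZ]] p.1 p.2

theorem Margolus_eq_controlledGate : Margolus = controlledGate margolusBlock := by
  simp only [Margolus, RYfull_eq_controlledGate, CX0_eq_controlledGate, CX1_eq_controlledGate,
    controlledGate_mul]
  congr 1
  funext p
  have four_quarters : -(Real.pi / 4) + (-(Real.pi / 4) + -(Real.pi / 4)) + -(Real.pi / 4) =
      -Real.pi := by ring
  fin_cases p <;> simp [margolusBlock, mul_assoc, RY_mul_RY, RY_mul_RY_assoc, pauliX_mul_RY,
    pauliX_mul_RY_assoc, pauliX_mul_pauliX, RY_zero, four_quarters, RY_neg_pi_mul_pauliX]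

section SignedBasis

variable {m n α : Type*} [DecidableEq m]

def MapsBasisToSignedBasis [Ring α] (M : Matrix m n α) : Prop :=
  ∀ x, ∃ (y : m) (s : α), (s = 1 ∨ s = -1) ∧ ∀ k, M k x = if k = y then s else 0

theorem mapsBasisToSignedBasis_one [Ring α] : MapsBasisToSignedBasis (1 : Matrix m m α) :=
  fun x => ⟨x, 1, .inl rfl, fun _ => one_apply⟩

theorem MapsBasisToSignedBasis.controlledGate {ι : Type*} [DecidableEq ι] [Ring α]
    {f : ι → Matrix m m α} (hf : ∀ i, MapsBasisToSignedBasis (f i)) :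
    MapsBasisToSignedBasis (controlledGate f) := by
  rintro ⟨i, a⟩
  obtain ⟨b, s, hs, hcol⟩ := hf i a
  refine ⟨(i, b), s, hs, fun ⟨j, c⟩ => ?_⟩
  by_cases h : j = i
  · subst h
    simp [controlledGate_apply, hcol]
  · simp [controlledGate_apply, h]

end SignedBasis

theorem mapsBasisToSignedBasis_pauliX : MapsBasisToSignedBasis pauliX := by
  intro x
  refine ⟨x + 1, 1, .inl rfl, fun k => ?_⟩
  fin_cases x <;> fin_cases k <;> simp [pauliX]

theorem mapsBasisToSignedBasis_pauliZ : MapsBasisToSignedBasis pauliZ := by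
  intro x
  fin_cases x
  · exact ⟨0, 1, .inl rfl, fun k => by fin_cases k <;> simp [pauliZ]⟩
  · exact ⟨1, -1, .inr rfl, fun k => by fin_cases k <;> simp [pauliZ]⟩

theorem mapsBasisToSignedBasis_margolusBlock (p : Fin 2 × Fin 2) :
    MapsBasisToSignedBasis (margolusBlock p) := by
  obtain ⟨a, b⟩ := p
  fin_cases a <;> fin_cases b
  exacts [mapsBasisToSignedBasis_one, mapsBasisToSignedBasis_one, mapsBasisToSignedBasis_pauliX,
    mapsBasisToSignedBasis_pauliZ]

theorem not_forall_existsUnique_RY_ne_zero {θ : ℝ} (h0 : 0 < θ) (hπ : θ < Real.pi) :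
    ¬ ∀ j, ∃! i, RY θ i j ≠ 0 := by
  intro h
  have hcos : RY θ 0 0 ≠ 0 := by
    have : (Real.cos (θ / 2) : ℂ) ≠ 0 :=
      Complex.ofReal_ne_zero.mpr (Real.cos_pos_of_mem_Ioo ⟨by linarith, by linarith⟩).ne'
    simpa [RY] using this
  have hsin : RY θ 1 0 ≠ 0 := by
    have : (Real.sin (θ / 2) : ℂ) ≠ 0 :=
      Complex.ofReal_ne_zero.mpr (Real.sin_pos_of_pos_of_lt_pi (by linarith) (by linarith)).ne'
    simpa [RY] using this
  obtain ⟨i, -, huniq⟩ := h 0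
  exact absurd ((huniq 0 hcos).trans (huniq 1 hsin).symm) (by decide)

/-- The Margolus circuit is qfree: it maps each computational basis state to ±1 times a
computational basis state, even though the individual RY gates are not qfree. -/
theorem stmt13 :
    (∀ x : (Fin 2 × Fin 2) × Fin 2, ∃ (y : (Fin 2 × Fin 2) × Fin 2) (s : ℂ),
      (s = 1 ∨ s = -1) ∧ ∀ k, Margolus k x = if k = y then s else 0) ∧
    ¬ (∀ j, ∃! i, RY (Real.pi / 4) i j ≠ 0) := by
  refine ⟨?_, not_forall_existsUnique_RY_ne_zero (by positivity) (by linarith [Real.pi_pos])⟩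
  rw [Margolus_eq_controlledGate]
  exact MapsBasisToSignedBasis.controlledGate mapsBasisToSignedBasis_margolusBlock
end
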